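/- arXiv:1102.3144 — 4 statements merged into one kernel-verified Lean document; each statement's English description precedes it below -/
import Mathlib

section
/- Let $y, y' \in \mathbb{R}_+^n$ be sorted in nondecreasing order, let $p$ be a permutation of $\{1,\dots,n\}$, and let $\delta > 0$. If $|y_k - y'_{p(k)}| < \delta$ for all $k = 1,\dots,n$, then $|y_k - y'_k| < \delta$ for all $k = 1,\dots,n$. -/
open Finset

/-- Pigeonhole: `f` cannot map the `k + 1` elements of `Iic k` injectively into the `k`
elements of `Iio k`. -/
theorem Function.Injective.exists_le_and_le_apply {α : Type*} [LinearOrder α]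
    [LocallyFiniteOrderBot α] {f : α → α} (hf : f.Injective) (k : α) :
    ∃ i, i ≤ k ∧ k ≤ f i := by
  by_contra! hlt
  have hmaps : Set.MapsTo f (Iic k) (Iio k) := fun i hi => by
    simpa using hlt i (mem_Iic.mp hi)
  have hcard := card_le_card_of_injOn f hmaps hf.injOn
  rw [← Iio_insert, card_insert_of_notMem notMem_Iio_self] at hcard
  omega

theorem Monotone.sub_lt_of_forall_comp_sub_lt {α β : Type*} [LinearOrder α]
    [LocallyFiniteOrderBot α] [AddCommGroup β] [LinearOrder β] [IsOrderedAddMonoid β]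
    {y y' : α → β} (hy : Monotone y) (hy' : Monotone y') {f : α → α} (hf : f.Injective)
    {δ : β} (h : ∀ i, y' (f i) - y i < δ) (k : α) :
    y' k - y k < δ := by
  obtain ⟨i, hik, hki⟩ := hf.exists_le_and_le_apply k
  calc y' k - y k ≤ y' (f i) - y i := sub_le_sub (hy' hki) (hy hik)
    _ < δ := h i

theorem sorted_matching_lt_delta_general {n : ℕ}
    (y y' : Fin n → ℝ)
    (hy : Monotone y) (hy' : Monotone y')
    (p : Equiv.Perm (Fin n)) (δ : ℝ)
    (h : ∀ k, |y k - y' (p k)| < δ) :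
    ∀ k, |y k - y' k| < δ := by
  intro k
  rw [abs_sub_lt_iff]
  constructor
  · refine hy'.sub_lt_of_forall_comp_sub_lt hy p.symm.injective (fun j => ?_) k
    simpa using (abs_sub_lt_iff.mp (h (p.symm j))).1
  · exact hy.sub_lt_of_forall_comp_sub_lt hy' p.injective (fun i => (abs_sub_lt_iff.mp (h i)).2) k

/-- Strict-inequality form of Lemma C: if a permuted matching of two sorted
nonnegative vectors is within `δ` coordinatewise, then so is the identity matching. -/
theorem sorted_matching_lt_delta {n : ℕ}
    (y y' : Fin n → ℝ)
    (hy0 : ∀ k, 0 ≤ y k) (hy'0 : ∀ k, 0 ≤ y' k)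
    (hy : Monotone y) (hy' : Monotone y')
    (p : Equiv.Perm (Fin n)) (δ : ℝ) (hδ : 0 < δ)
    (h : ∀ k, |y k - y' (p k)| < δ) :
    ∀ k, |y k - y' k| < δ :=
  sorted_matching_lt_delta_general y y' hy hy' p δ h
end

section
/- Let $(X^{(c)})_{c \in \mathbb{N}}$ be random variables with values in $\mathbb{N}$ and $\mathbb{E}[X^{(c)}] = c/\mu$, and let $X^{(\infty)}$ be a random variable with values in $\mathbb{R}_+$ and mean $1/\mu$. Define $\bar{X}^{(c)}$ by $\mathbb{P}(\bar{X}^{(c)} \le y) = (\mu/c) \sum_{z=1}^{y} \mathbb{P}(X^{(c)} \ge z)$ for $y \in \mathbb{N}$, and $\bar{X}^{(\infty)}$ by $\mathbb{P}(\bar{X}^{(\infty)} \le y) = \mu \int_0^y \mathbb{P}(X^{(\infty)} \ge z)\,dz$. If $X^{(c)}/c$ converges weakly to $X^{(\infty)}$ as $c \to \infty$, then $\bar{X}^{(c)}/c$ converges weakly to $\bar{X}^{(\infty)}$. -/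
/-!
Weak convergence of probability measures on `ℝ` follows from convergence of the distribution
functions at every point, since the intervals `Ioc a b` form a π-system of arbitrarily small
neighbourhoods. For integer-valued variables the discrete equilibrium relation is a Riemann sum:
`ℙ(X̄⁽ᶜ⁾/c ≤ y) = μ₀ ∫_0^{⌊cy⌋/c} ℙ(X⁽ᶜ⁾/c ≥ z) dz`. By the portmanteau theorem
`ℙ(X⁽ᶜ⁾/c ≥ z) → ℙ(X⁽∞⁾ ≥ z)` unless `z` is one of the countably many atoms of `X⁽∞⁾`, so by
bounded convergence the integrals tend to `μ₀ ∫_0^y ℙ(X⁽∞⁾ ≥ z) dz = ℙ(X̄⁽∞⁾ ≤ y)`.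
-/

open MeasureTheory Filter Topology BoundedContinuousFunction Set
open scoped ENNReal

namespace MeasureTheory

section Law

variable {Ω E : Type*} [MeasurableSpace Ω] [MeasurableSpace E]

noncomputable def law (ℙ : Measure Ω) [IsProbabilityMeasure ℙ] {X : Ω → E} (hX : Measurable X) :
    ProbabilityMeasure E :=
  ⟨ℙ.map X, Measure.isProbabilityMeasure_map hX.aemeasurable⟩

variable {ℙ : Measure Ω} [IsProbabilityMeasure ℙ]

lemma law_real_apply {X : Ω → E} (hX : Measurable X) {s : Set E} (hs : MeasurableSet s) :
    (law ℙ hX : Measure E).real s = (ℙ (X ⁻¹' s)).toReal :=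
  map_measureReal_apply hX hs

lemma tendsto_law_iff_forall_integral_tendsto [TopologicalSpace E] [OpensMeasurableSpace E]
    {ι : Type*} {l : Filter ι} {X : ι → Ω → E} {Y : Ω → E} (hX : ∀ i, Measurable (X i))
    (hY : Measurable Y) :
    Tendsto (fun i ↦ law ℙ (hX i)) l (𝓝 (law ℙ hY)) ↔
      ∀ f : E →ᵇ ℝ, Tendsto (fun i ↦ ∫ ω, f (X i ω) ∂ℙ) l (𝓝 (∫ ω, f (Y ω) ∂ℙ)) := by
  have hmap : ∀ {Z : Ω → E} (hZ : Measurable Z) (f : E →ᵇ ℝ),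
      ∫ x, f x ∂(law ℙ hZ : Measure E) = ∫ ω, f (Z ω) ∂ℙ := fun hZ f ↦
    integral_map hZ.aemeasurable f.continuous.aestronglyMeasurable
  simp only [ProbabilityMeasure.tendsto_iff_forall_integral_tendsto, hmap]

end Law

namespace ProbabilityMeasure

variable {ι : Type*} {l : Filter ι} {μs : ι → ProbabilityMeasure ℝ} {ν : ProbabilityMeasure ℝ}

theorem tendsto_of_forall_tendsto_measureReal_Iic [l.IsCountablyGenerated]
    (h : ∀ y, Tendsto (fun i ↦ (μs i : Measure ℝ).real (Iic y)) l
      (𝓝 ((ν : Measure ℝ).real (Iic y)))) :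
    Tendsto μs l (𝓝 ν) := by
  refine (isPiSystem_Ioc id id).tendsto_probabilityMeasure_of_tendsto_of_mem ?_ ?_ ?_
  · rintro _ ⟨a, b, -, rfl⟩
    exact measurableSet_Ioc
  · intro u hu x hx
    obtain ⟨ε, hε, hball⟩ := Metric.isOpen_iff.1 hu x hx
    refine ⟨Ioc (x - ε / 2) (x + ε / 2), ⟨x - ε / 2, x + ε / 2, by dsimp only [id]; linarith, rfl⟩,
      Ioc_mem_nhds (by linarith) (by linarith), fun z hz ↦ hball ?_⟩
    rw [Real.ball_eq_Ioo]
    exact ⟨by linarith [hz.1], by linarith [hz.2]⟩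
  · rintro _ ⟨a, b, hab, rfl⟩
    dsimp only [id] at hab ⊢
    have hIoc : ∀ μ : ProbabilityMeasure ℝ,
        (μ (Ioc a b) : ℝ) = (μ : Measure ℝ).real (Iic b) - (μ : Measure ℝ).real (Iic a) := by
      intro μ
      have hdiff : Iic b \ Iic a = Ioc a b := by ext; simp [and_comm]
      rw [← measureReal_eq_coe_coeFn, ← hdiff,
        measureReal_sdiff (Iic_subset_Iic.2 hab.le) measurableSet_Iic]
    rw [← NNReal.tendsto_coe]
    simp only [hIoc]
    exact (h b).sub (h a)

theorem ae_tendsto_measureReal_Ici_of_tendsto (h : Tendsto μs l (𝓝 ν)) :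
    ∀ᵐ z, Tendsto (fun i ↦ (μs i : Measure ℝ).real (Ici z)) l
      (𝓝 ((ν : Measure ℝ).real (Ici z))) := by
  have hatoms : ∀ᵐ z, (ν : Measure ℝ) {z} = 0 := by
    filter_upwards [(Measure.countable_meas_level_set_pos (μ := (ν : Measure ℝ))
      measurable_id).ae_notMem volume] with z hz
    simpa [pos_iff_ne_zero] using hz
  filter_upwards [hatoms] with z hz
  have hlim := tendsto_measure_of_null_frontier_of_tendsto h (E := Ici z)
    (by simp [coeFn_def, hz])
  simpa [← NNReal.tendsto_coe] using hlim

end ProbabilityMeasure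

end MeasureTheory

section StepFunction

variable {c : ℝ}

theorem setLIntegral_Ioc_natCeil_mul_eq_sum_mul (d : ℕ → ℝ≥0∞) (hc : 0 < c) (n : ℕ) :
    ∫⁻ z in Ioc 0 (n / c), d ⌈z * c⌉₊ = (∑ k ∈ Finset.Icc 1 n, d k) * ENNReal.ofReal c⁻¹ := by
  induction n with
  | zero => simp
  | succ n ih =>
    have hstep : ∀ z ∈ Ioc (n / c) ((n + 1 : ℕ) / c), d ⌈z * c⌉₊ = d (n + 1) := by
      rintro z ⟨hlo, hhi⟩
      rw [div_lt_iff₀ hc] at hlo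
      rw [le_div_iff₀ hc] at hhi
      congr 1
      rw [Nat.ceil_eq_iff n.succ_ne_zero]
      push_cast at hhi ⊢
      exact ⟨hlo, hhi⟩
    have hvol : volume (Ioc ((n : ℝ) / c) ((n + 1 : ℕ) / c)) = ENNReal.ofReal c⁻¹ := by
      rw [Real.volume_Ioc]
      congr 1
      push_cast
      field_simp
      ring
    have h0 : (0 : ℝ) ≤ n / c := by positivity
    have hmono : (n : ℝ) / c ≤ (n + 1 : ℕ) / c := by gcongr; simp
    rw [← Ioc_union_Ioc_eq_Ioc h0 hmono,
      lintegral_union measurableSet_Ioc (Ioc_disjoint_Ioc_of_le le_rfl), ih,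
      setLIntegral_congr_fun measurableSet_Ioc hstep, setLIntegral_const, hvol,
      Finset.sum_Icc_succ_top (by omega), add_mul]

theorem intervalIntegral_natCeil_mul_eq_sum_div {a : ℕ → ℝ} (ha : ∀ k, 0 ≤ a k) (hc : 0 < c)
    (n : ℕ) :
    ∫ z in (0)..(n / c), a ⌈z * c⌉₊ = (∑ k ∈ Finset.Icc 1 n, a k) / c := by
  have hmeas : Measurable fun z : ℝ ↦ a ⌈z * c⌉₊ :=
    measurable_from_top.comp (Nat.measurable_ceil.comp (measurable_mul_const c))
  rw [intervalIntegral.integral_of_le (by positivity),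
    integral_eq_lintegral_of_nonneg_ae (.of_forall fun z ↦ ha _) hmeas.aestronglyMeasurable,
    setLIntegral_Ioc_natCeil_mul_eq_sum_mul (fun k ↦ ENNReal.ofReal (a k)) hc,
    ← ENNReal.ofReal_sum_of_nonneg fun k _ ↦ ha k,
    ← ENNReal.ofReal_mul (Finset.sum_nonneg fun k _ ↦ ha k), ENNReal.toReal_ofReal
      (mul_nonneg (Finset.sum_nonneg fun k _ ↦ ha k) (inv_nonneg.2 hc.le)), div_eq_mul_inv]

end StepFunction

namespace intervalIntegral

theorem tendsto_integral_of_bounded_of_tendsto_right {ι E : Type*}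
    [NormedAddCommGroup E] [NormedSpace ℝ E] {l : Filter ι} [l.IsCountablyGenerated]
    {F : ι → ℝ → E} {f : ℝ → E} {a y C : ℝ} {b : ι → ℝ}
    (hF_meas : ∀ i, AEStronglyMeasurable (F i)) (h_bound : ∀ i x, ‖F i x‖ ≤ C)
    (h_lim : ∀ᵐ x, Tendsto (fun i ↦ F i x) l (𝓝 (f x))) (hb : Tendsto b l (𝓝 y)) :
    Tendsto (fun i ↦ ∫ x in a..b i, F i x) l (𝓝 (∫ x in a..y, f x)) := by
  have hint : ∀ i u v, IntervalIntegrable (F i) volume u v := fun i u v ↦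
    intervalIntegrable_const.mono_fun' (hF_meas i).restrict (.of_forall (h_bound i))
  have hfixed : Tendsto (fun i ↦ ∫ x in a..y, F i x) l (𝓝 (∫ x in a..y, f x)) :=
    tendsto_integral_filter_of_dominated_convergence (fun _ ↦ C)
      (.of_forall fun i ↦ (hF_meas i).restrict)
      (.of_forall fun i ↦ .of_forall fun x _ ↦ h_bound i x)
      intervalIntegrable_const (h_lim.mono fun x hx _ ↦ hx)
  have hrest : Tendsto (fun i ↦ ∫ x in y..b i, F i x) l (𝓝 0) := by
    have hlen : Tendsto (fun i ↦ C * |b i - y|) l (𝓝 0) := by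
      simpa using (hb.sub_const y).abs.const_mul C
    exact squeeze_zero_norm (fun i ↦ norm_integral_le_of_norm_le_const fun x _ ↦ h_bound i x) hlen
  simpa [integral_add_adjacent_intervals (hint _ a y) (hint _ y _)] using hfixed.add hrest

end intervalIntegral

section Tails

variable {Ω : Type*} [MeasurableSpace Ω] {ℙ : Measure Ω}

theorem tendsto_intervalIntegral_measure_le_of_tendsto_law [IsProbabilityMeasure ℙ] {ι : Type*}
    {l : Filter ι} [l.IsCountablyGenerated] {X : ι → Ω → ℝ} {Y : Ω → ℝ}
    (hX : ∀ i, Measurable (X i)) (hY : Measurable Y)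
    (h : Tendsto (fun i ↦ law ℙ (hX i)) l (𝓝 (law ℙ hY))) {a y : ℝ} {b : ι → ℝ}
    (hb : Tendsto b l (𝓝 y)) :
    Tendsto (fun i ↦ ∫ z in a..b i, (ℙ {ω | z ≤ X i ω}).toReal) l
      (𝓝 (∫ z in a..y, (ℙ {ω | z ≤ Y ω}).toReal)) := by
  have hlaw : ∀ {Z : Ω → ℝ} (hZ : Measurable Z) (z : ℝ),
      (ℙ {ω | z ≤ Z ω}).toReal = (law ℙ hZ : Measure ℝ).real (Ici z) :=
    fun hZ z ↦ (law_real_apply hZ measurableSet_Ici).symm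
  simp only [hlaw (hX _), hlaw hY]
  refine intervalIntegral.tendsto_integral_of_bounded_of_tendsto_right (C := 1) (fun i ↦ ?_)
    (fun i z ↦ ?_) (ProbabilityMeasure.ae_tendsto_measureReal_Ici_of_tendsto h) hb
  · have hanti : Antitone fun z ↦ (law ℙ (hX i) : Measure ℝ).real (Ici z) :=
      fun s t hst ↦ measureReal_mono (Ici_subset_Ici.2 hst)
    exact hanti.measurable.aestronglyMeasurable
  · rw [Real.norm_of_nonneg measureReal_nonneg]
    exact measureReal_le_one

theorem toReal_measure_div_le_eq_intervalIntegral {W X : Ω → ℝ} {c : ℕ} (hc : 0 < c) {μ₀ : ℝ}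
    (hW : ∀ ω, ∃ k : ℕ, 1 ≤ k ∧ W ω = k) (hX : ∀ ω, ∃ k : ℕ, X ω = k)
    (hcdf : ∀ y : ℕ, (ℙ {ω | W ω ≤ y}).toReal
      = μ₀ / c * ∑ z ∈ Finset.Icc 1 y, (ℙ {ω | (z : ℝ) ≤ X ω}).toReal)
    (y : ℝ) :
    (ℙ {ω | W ω / c ≤ y}).toReal
      = μ₀ * ∫ z in (0)..(⌊y * c⌋₊ / c), (ℙ {ω | z ≤ X ω / c}).toReal := by
  have hc' : (0 : ℝ) < c := by exact_mod_cast hc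
  have hW' : {ω | W ω / c ≤ y} = {ω | W ω ≤ (⌊y * c⌋₊ : ℕ)} := by
    ext ω
    obtain ⟨k, hk, hWk⟩ := hW ω
    simp only [mem_ofPred_eq, hWk, div_le_iff₀ hc', Nat.cast_le,
      Nat.le_floor_iff' (by omega : k ≠ 0)]
  have hX' : ∀ z : ℝ, {ω | z ≤ X ω / c} = {ω | ((⌈z * c⌉₊ : ℕ) : ℝ) ≤ X ω} := by
    intro z
    ext ω
    obtain ⟨k, hXk⟩ := hX ω
    simp only [mem_ofPred_eq, hXk, le_div_iff₀ hc', Nat.cast_le, Nat.ceil_le]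
  simp only [hW', hcdf, hX']
  rw [intervalIntegral_natCeil_mul_eq_sum_div (a := fun k : ℕ ↦ (ℙ {ω | (k : ℝ) ≤ X ω}).toReal)
    (fun _ ↦ ENNReal.toReal_nonneg) hc']
  ring

end Tails

theorem equilibrium_weak_convergence_general {Ω : Type*} [MeasurableSpace Ω]
    (ℙ : Measure Ω) [IsProbabilityMeasure ℙ] (μ₀ : ℝ)
    (X : ℕ → Ω → ℝ) (Xinf : Ω → ℝ)
    (hXmeas : ∀ c, Measurable (X c)) (hXinfmeas : Measurable Xinf)
    -- the prelimit document sizes are `ℕ = {1,2,…}`-valued with mean `c/μ₀`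
    (hXnat : ∀ c : ℕ, 1 ≤ c → ∀ ω, ∃ k : ℕ, 1 ≤ k ∧ X c ω = k)
    -- the equilibrium versions
    (Xbar : ℕ → Ω → ℝ) (Xbarinf : Ω → ℝ)
    (hXbarmeas : ∀ c, Measurable (Xbar c)) (hXbarinfmeas : Measurable Xbarinf)
    (hXbarnat : ∀ c : ℕ, 1 ≤ c → ∀ ω, ∃ k : ℕ, 1 ≤ k ∧ Xbar c ω = k)
    (hXbarcdf : ∀ c : ℕ, 1 ≤ c → ∀ y : ℕ,
      (ℙ {ω | Xbar c ω ≤ (y : ℝ)}).toReal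
        = (μ₀ / c) * ∑ z ∈ Finset.Icc 1 y, (ℙ {ω | (z : ℝ) ≤ X c ω}).toReal)
    (hXbarinfcdf : ∀ y : ℝ, 0 ≤ y →
      (ℙ {ω | Xbarinf ω ≤ y}).toReal
        = μ₀ * ∫ z in Set.Ioc (0:ℝ) y, (ℙ {ω | z ≤ Xinf ω}).toReal)
    -- weak convergence of `X⁽ᶜ⁾/c` to `X⁽∞⁾`
    (hconv : ∀ f : BoundedContinuousFunction ℝ ℝ,
      Tendsto (fun c : ℕ => ∫ ω, f (X c ω / c) ∂ℙ) atTop (𝓝 (∫ ω, f (Xinf ω) ∂ℙ))) :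
    -- then `X̄⁽ᶜ⁾/c` converges weakly to `X̄⁽∞⁾`
    ∀ f : BoundedContinuousFunction ℝ ℝ,
      Tendsto (fun c : ℕ => ∫ ω, f (Xbar c ω / c) ∂ℙ) atTop
        (𝓝 (∫ ω, f (Xbarinf ω) ∂ℙ)) := by
  have hXc (c : ℕ) : Measurable fun ω ↦ X c ω / c := (hXmeas c).div_const _
  have hXbarc (c : ℕ) : Measurable fun ω ↦ Xbar c ω / c := (hXbarmeas c).div_const _
  have hlaw := (tendsto_law_iff_forall_integral_tendsto hXc hXinfmeas).2 hconv
  refine (tendsto_law_iff_forall_integral_tendsto hXbarc hXbarinfmeas).1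
    (ProbabilityMeasure.tendsto_of_forall_tendsto_measureReal_Iic fun y ↦ ?_)
  simp only [law_real_apply _ measurableSet_Iic]
  change Tendsto (fun c : ℕ ↦ (ℙ {ω | Xbar c ω / c ≤ y}).toReal) atTop
    (𝓝 (ℙ {ω | Xbarinf ω ≤ y}).toReal)
  have hcdf : ∀ᶠ c : ℕ in atTop, (ℙ {ω | Xbar c ω / c ≤ y}).toReal
      = μ₀ * ∫ z in (0)..(⌊y * c⌋₊ / c), (ℙ {ω | z ≤ X c ω / c}).toReal :=
    eventually_atTop.2 ⟨1, fun c hc ↦ toReal_measure_div_le_eq_intervalIntegral (by omega)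
      (hXbarnat c hc) (fun ω ↦ (hXnat c hc ω).imp fun _ ↦ And.right) (hXbarcdf c hc) y⟩
  rcases lt_or_ge y 0 with hy | hy
  · -- below `0` both distribution functions vanish
    have h0 : ℙ {ω | Xbarinf ω ≤ 0} = 0 := by
      simpa [ENNReal.toReal_eq_zero_iff, measure_ne_top] using hXbarinfcdf 0 le_rfl
    have hy0 : ℙ {ω | Xbarinf ω ≤ y} = 0 :=
      measure_mono_null (fun _ hω ↦ le_trans hω hy.le) h0
    rw [hy0, ENNReal.toReal_zero]
    refine tendsto_const_nhds.congr' ?_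
    filter_upwards [hcdf] with c hc
    rw [hc, Nat.floor_of_nonpos (mul_nonpos_of_nonpos_of_nonneg hy.le c.cast_nonneg)]
    simp
  · rw [hXbarinfcdf y hy, ← intervalIntegral.integral_of_le hy]
    refine (Tendsto.const_mul μ₀ ?_).congr' (EventuallyEq.symm hcdf)
    exact tendsto_intervalIntegral_measure_le_of_tendsto_law hXc hXinfmeas hlaw
      ((tendsto_nat_floor_mul_div_atTop hy).comp tendsto_natCast_atTop_atTop)

/-- Lemma 6.1 of the paper: if `X⁽ᶜ⁾/c ⇒ X⁽∞⁾`, then the equilibrium (size-biased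
residual) versions satisfy `X̄⁽ᶜ⁾/c ⇒ X̄⁽∞⁾`.  Here the `X⁽ᶜ⁾` are `ℕ`-valued with
mean `c/μ₀`, `X⁽∞⁾` is nonnegative with mean `1/μ₀`, the law of `X̄⁽ᶜ⁾` is given by
`ℙ(X̄⁽ᶜ⁾ ≤ y) = (μ₀/c) ∑_{z=1}^y ℙ(X⁽ᶜ⁾ ≥ z)` and that of `X̄⁽∞⁾` by
`ℙ(X̄⁽∞⁾ ≤ y) = μ₀ ∫_0^y ℙ(X⁽∞⁾ ≥ z) dz`, and weak convergence is convergence of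
expectations of bounded continuous functions. -/
theorem equilibrium_weak_convergence {Ω : Type*} [MeasurableSpace Ω]
    (ℙ : Measure Ω) [IsProbabilityMeasure ℙ] (μ₀ : ℝ) (hμ₀ : 0 < μ₀)
    (X : ℕ → Ω → ℝ) (Xinf : Ω → ℝ)
    (hXmeas : ∀ c, Measurable (X c)) (hXinfmeas : Measurable Xinf)
    -- the prelimit document sizes are `ℕ = {1,2,…}`-valued with mean `c/μ₀`
    (hXnat : ∀ c : ℕ, 1 ≤ c → ∀ ω, ∃ k : ℕ, 1 ≤ k ∧ X c ω = k)
    (hXmean : ∀ c : ℕ, 1 ≤ c → ∫ ω, X c ω ∂ℙ = c / μ₀)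
    -- the limit document size is nonnegative with mean `1/μ₀`
    (hXinfpos : ∀ ω, 0 ≤ Xinf ω) (hXinfint : Integrable Xinf ℙ)
    (hXinfmean : ∫ ω, Xinf ω ∂ℙ = 1 / μ₀)
    -- the equilibrium versions
    (Xbar : ℕ → Ω → ℝ) (Xbarinf : Ω → ℝ)
    (hXbarmeas : ∀ c, Measurable (Xbar c)) (hXbarinfmeas : Measurable Xbarinf)
    (hXbarnat : ∀ c : ℕ, 1 ≤ c → ∀ ω, ∃ k : ℕ, 1 ≤ k ∧ Xbar c ω = k)
    (hXbarcdf : ∀ c : ℕ, 1 ≤ c → ∀ y : ℕ,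
      (ℙ {ω | Xbar c ω ≤ (y : ℝ)}).toReal
        = (μ₀ / c) * ∑ z ∈ Finset.Icc 1 y, (ℙ {ω | (z : ℝ) ≤ X c ω}).toReal)
    (hXbarinfcdf : ∀ y : ℝ, 0 ≤ y →
      (ℙ {ω | Xbarinf ω ≤ y}).toReal
        = μ₀ * ∫ z in Set.Ioc (0:ℝ) y, (ℙ {ω | z ≤ Xinf ω}).toReal)
    -- weak convergence of `X⁽ᶜ⁾/c` to `X⁽∞⁾`
    (hconv : ∀ f : BoundedContinuousFunction ℝ ℝ,
      Tendsto (fun c : ℕ => ∫ ω, f (X c ω / c) ∂ℙ) atTop (𝓝 (∫ ω, f (Xinf ω) ∂ℙ))) :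
    -- then `X̄⁽ᶜ⁾/c` converges weakly to `X̄⁽∞⁾`
    ∀ f : BoundedContinuousFunction ℝ ℝ,
      Tendsto (fun c : ℕ => ∫ ω, f (Xbar c ω / c) ∂ℙ) atTop
        (𝓝 (∫ ω, f (Xbarinf ω) ∂ℙ)) :=
  equilibrium_weak_convergence_general ℙ μ₀ X Xinf hXmeas hXinfmeas hXnat Xbar Xbarinf hXbarmeas
    hXbarinfmeas hXbarnat hXbarcdf hXbarinfcdf hconv
end

section
/- Let $\mathcal{I}$ be a finite set, $\mathcal{J}$ a finite set, $\mathcal{K} = \{(j,i) : j \in i\}$ for routes $i \subseteq \mathcal{J}$, with positive reals $\rho_i$, positive integers $\zeta_{ji}$, and positive functions $\phi_j : \mathbb{N} \to (0,\infty)$. For $n \in \mathbb{Z}_+^I$ define $S(n) = \{m \in \mathbb{Z}_+^K : \sum_{j : j \in i} m_{ji} = n_i \ \forall i\}$ and $B_n = \sum_{m \in S(n)} \prod_{j} \binom{m_j}{(m_{ji})_{i \ni j}} \frac{\prod_{i : j \in i} \zeta_{ji}^{m_{ji}}}{\prod_{l=1}^{m_j} \phi_j(l)}$, where $m_j = \sum_{i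 \ni j} m_{ji}$. Then $\sum_{n \in \mathbb{Z}_+^I} B_n \prod_{i \in \mathcal{I}} \rho_i^{n_i} = \prod_{j \in \mathcal{J}} \sum_{m_j = 0}^{\infty} \prod_{l=1}^{m_j} \frac{\sum_{i : j \in i} \zeta_{ji} \rho_i}{\phi_j(l)}$, with both sides possibly infinite. -/
open scoped ENNReal

lemma prod_univ_eq_mul_subtype {J M : Type*} [Fintype J] [DecidableEq J] [CommMonoid M]
    (a : J) (f : J → M) : ∏ j, f j = f a * ∏ j : {j // j ≠ a}, f j.1 := by
  rw [← Finset.mul_prod_erase Finset.univ f (Finset.mem_univ a)]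
  congr 1
  exact Finset.prod_subtype _ (fun x => by simp) f

lemma tsum_pi_prod_aux : ∀ (n : ℕ) (J : Type*) [Fintype J] [DecidableEq J]
    (β : J → Type*) (g : ∀ j, β j → ℝ≥0∞), Fintype.card J = n →
    ∑' f : ∀ j, β j, ∏ j, g j (f j) = ∏ j, ∑' b, g j b := by
  intro n
  induction n with
  | zero =>
    intro J _ _ β g hc
    have hJ : IsEmpty J := Fintype.card_eq_zero_iff.mp hc
    have h1 : ∀ f : ∀ j, β j, ∏ j, g j (f j) = 1 := fun f => by simp
    simp only [h1]
    rw [tsum_eq_single (fun j => (hJ.elim j)) (fun b hb => absurd (Subsingleton.elim b _) hb)]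
    simp
  | succ n ih =>
    intro J _ _ β g hc
    obtain ⟨a⟩ : Nonempty J := Fintype.card_pos_iff.mp (by omega)
    have hcard : Fintype.card {j : J // j ≠ a} = n := by
      have := Fintype.card_subtype_compl (fun j : J => j = a)
      simp only [Fintype.card_subtype_eq] at this
      simp only [ne_eq]
      omega
    calc ∑' f : ∀ j, β j, ∏ j, g j (f j)
        = ∑' p : β a × (∀ j : {j // j ≠ a}, β j.1),
            ∏ j, g j ((Equiv.piSplitAt a β).symm p j) :=
          ((Equiv.piSplitAt a β).symm.tsum_eq fun f => ∏ j, g j (f j)).symm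
      _ = ∑' p : β a × (∀ j : {j // j ≠ a}, β j.1),
            g a p.1 * ∏ j : {j // j ≠ a}, g j.1 (p.2 j) := by
          refine tsum_congr fun p => ?_
          rw [prod_univ_eq_mul_subtype a]
          congr 1
          · congr 1
            simp [Equiv.piSplitAt]
          · refine Finset.prod_congr rfl fun j _ => ?_
            congr 1
            simp [Equiv.piSplitAt, j.2]
      _ = (∑' b, g a b) * ∑' f2 : (∀ j : {j // j ≠ a}, β j.1),
            ∏ j : {j // j ≠ a}, g j.1 (f2 j) := by
          rw [ENNReal.tsum_prod']
          simp_rw [ENNReal.tsum_mul_left]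
          rw [ENNReal.tsum_mul_right]
      _ = (∑' b, g a b) * ∏ j : {j // j ≠ a}, ∑' b, g j.1 b := by
          rw [ih _ _ _ hcard]
      _ = ∏ j, ∑' b, g j b := (prod_univ_eq_mul_subtype a fun j => ∑' b, g j b).symm

lemma queue_tsum {I : Type*} [Fintype I] [DecidableEq I] (s : Finset I)
    (x : I → ℝ≥0∞) (ψ : ℕ → ℝ≥0∞) :
    ∑' v : I → ℕ, (if ∀ i ∉ s, v i = 0 then
        (Nat.multinomial s v : ℝ≥0∞) * (∏ i ∈ s, x i ^ v i) * ψ (∑ i ∈ s, v i) else 0)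
      = ∑' m : ℕ, (∑ i ∈ s, x i) ^ m * ψ m := by
  have h1 : ∀ v : I → ℕ,
      (if ∀ i ∉ s, v i = 0 then
        (Nat.multinomial s v : ℝ≥0∞) * (∏ i ∈ s, x i ^ v i) * ψ (∑ i ∈ s, v i) else 0)
      = ∑' m : ℕ, (if v ∈ Finset.piAntidiag s m then
          (Nat.multinomial s v : ℝ≥0∞) * (∏ i ∈ s, x i ^ v i) * ψ m else 0) := by
    intro v
    by_cases h : ∀ i ∉ s, v i = 0
    · rw [if_pos h, tsum_eq_single (∑ i ∈ s, v i)]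
      · rw [if_pos]
        rw [Finset.mem_piAntidiag]
        exact ⟨rfl, fun i hi => by by_contra hc; exact hi (h i hc)⟩
      · intro m hm
        rw [if_neg]
        rw [Finset.mem_piAntidiag]
        rintro ⟨rfl, -⟩
        exact hm rfl
    · rw [if_neg h]
      symm
      rw [ENNReal.tsum_eq_zero]
      intro m
      rw [if_neg]
      rw [Finset.mem_piAntidiag]
      rintro ⟨-, hsupp⟩
      push_neg at h
      obtain ⟨i, hi, hvi⟩ := h
      exact hi (hsupp i hvi)
  calc ∑' v : I → ℕ, (if ∀ i ∉ s, v i = 0 then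
        (Nat.multinomial s v : ℝ≥0∞) * (∏ i ∈ s, x i ^ v i) * ψ (∑ i ∈ s, v i) else 0)
      = ∑' (v : I → ℕ) (m : ℕ), (if v ∈ Finset.piAntidiag s m then
          (Nat.multinomial s v : ℝ≥0∞) * (∏ i ∈ s, x i ^ v i) * ψ m else 0) := tsum_congr h1
    _ = ∑' (m : ℕ) (v : I → ℕ), (if v ∈ Finset.piAntidiag s m then
          (Nat.multinomial s v : ℝ≥0∞) * (∏ i ∈ s, x i ^ v i) * ψ m else 0) := ENNReal.tsum_comm
    _ = ∑' m : ℕ, (∑ i ∈ s, x i) ^ m * ψ m := by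
        refine tsum_congr fun m => ?_
        rw [tsum_eq_sum (s := Finset.piAntidiag s m) (fun v hv => if_neg hv)]
        rw [Finset.sum_congr rfl (fun v hv => if_pos hv)]
        rw [Finset.sum_pow_eq_sum_piAntidiag s x m, Finset.sum_mul]

/-- The normalizing-constant identity
`∑_n B_n ∏_i ρ_i^{n_i} = ∏_j ∑_{m_j} ∏_{l=1}^{m_j} (∑_{i∋j} ζ_{ji} ρ_i)/φ_j(l)`
relating the route-level constants `B_n` of the closed multi-class queueing
network to the per-queue constants, both sides possibly infinite (stated in
`ℝ≥0∞`). -/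
theorem normalizing_constant_product {J I : Type*}
    [Fintype J] [Fintype I] [DecidableEq J] [DecidableEq I]
    (route : I → Finset J) (hroute : ∀ i, (route i).Nonempty)
    (ζ : J → I → ℕ) (hζ : ∀ i, ∀ j ∈ route i, 0 < ζ j i)
    (ρ : I → ℝ≥0∞) (hρ : ∀ i, 0 < ρ i) (hρ' : ∀ i, ρ i ≠ ∞)
    (φ : J → ℕ → ℝ≥0∞) (hφ : ∀ j l, 1 ≤ l → 0 < φ j l) (hφ' : ∀ j l, φ j l ≠ ∞) :
    let routesThrough : J → Finset I := fun j => Finset.univ.filter fun i => j ∈ route i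
    let B : (I → ℕ) → ℝ≥0∞ := fun n =>
      ∑' m : J → I → ℕ,
        if (∀ i, ∑ j ∈ route i, m j i = n i) ∧ (∀ j i, j ∉ route i → m j i = 0) then
          ∏ j, (Nat.multinomial (routesThrough j) (m j) : ℝ≥0∞)
            * (∏ i ∈ routesThrough j, (ζ j i : ℝ≥0∞) ^ m j i)
            / ∏ l ∈ Finset.Icc 1 (∑ i ∈ routesThrough j, m j i), φ j l
        else 0
    ∑' n : I → ℕ, B n * ∏ i, ρ i ^ n i
      = ∏ j, ∑' mj : ℕ,
          ∏ l ∈ Finset.Icc 1 mj, (∑ i ∈ routesThrough j, (ζ j i : ℝ≥0∞) * ρ i) / φ j l := by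
  intro routesThrough B
  classical
  have hmem : ∀ j i, i ∈ routesThrough j ↔ j ∈ route i := fun j i => by
    simp [routesThrough]
  -- per-queue weight
  set g : J → (I → ℕ) → ℝ≥0∞ := fun j v =>
    if ∀ i ∉ routesThrough j, v i = 0 then
      (Nat.multinomial (routesThrough j) v : ℝ≥0∞)
        * (∏ i ∈ routesThrough j, ((ζ j i : ℝ≥0∞) * ρ i) ^ v i)
        * (∏ l ∈ Finset.Icc 1 (∑ i ∈ routesThrough j, v i), φ j l)⁻¹
    else 0 with hg
  -- the route-level weight
  set w : (J → I → ℕ) → ℝ≥0∞ := fun m =>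
    ∏ j, (Nat.multinomial (routesThrough j) (m j) : ℝ≥0∞)
            * (∏ i ∈ routesThrough j, (ζ j i : ℝ≥0∞) ^ m j i)
            / ∏ l ∈ Finset.Icc 1 (∑ i ∈ routesThrough j, m j i), φ j l with hw
  have inner : ∀ m : J → I → ℕ,
      (∑' n : I → ℕ,
        (if (∀ i, ∑ j ∈ route i, m j i = n i) ∧ (∀ j i, j ∉ route i → m j i = 0) then w m
          else 0) * ∏ i, ρ i ^ n i)
      = if (∀ j i, j ∉ route i → m j i = 0) then
          w m * ∏ i, ρ i ^ (∑ j ∈ route i, m j i) else 0 := by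
    intro m
    rw [tsum_eq_single (fun i => ∑ j ∈ route i, m j i)]
    · rw [if_congr (and_iff_right fun i => rfl) rfl rfl, ite_mul, zero_mul]
    · intro n hn
      rw [if_neg, zero_mul]
      rintro ⟨h1, -⟩
      exact hn (funext h1).symm
  calc ∑' n : I → ℕ, B n * ∏ i, ρ i ^ n i
      = ∑' (n : I → ℕ) (m : J → I → ℕ),
          (if (∀ i, ∑ j ∈ route i, m j i = n i) ∧ (∀ j i, j ∉ route i → m j i = 0) then w m
            else 0) * ∏ i, ρ i ^ n i :=
        tsum_congr fun n => ENNReal.tsum_mul_right.symm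
    _ = ∑' (m : J → I → ℕ) (n : I → ℕ),
          (if (∀ i, ∑ j ∈ route i, m j i = n i) ∧ (∀ j i, j ∉ route i → m j i = 0) then w m
            else 0) * ∏ i, ρ i ^ n i := ENNReal.tsum_comm
    _ = ∑' m : J → I → ℕ, if (∀ j i, j ∉ route i → m j i = 0) then
          w m * ∏ i, ρ i ^ (∑ j ∈ route i, m j i) else 0 := tsum_congr inner
    _ = ∑' m : J → I → ℕ, ∏ j, g j (m j) := by
        refine tsum_congr fun m => ?_
        by_cases hm : ∀ j i, j ∉ route i → m j i = 0
        · rw [if_pos hm]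
          have hc : (∏ i, ρ i ^ (∑ j ∈ route i, m j i))
              = ∏ j, ∏ i ∈ routesThrough j, ρ i ^ m j i := by
            simp_rw [← Finset.prod_pow_eq_pow_sum]
            exact Finset.prod_comm' fun i j => by simp [hmem j i]
          rw [hc, hw]
          rw [← Finset.prod_mul_distrib]
          refine Finset.prod_congr rfl fun j _ => ?_
          simp only [hg]
          rw [if_pos fun i hi => hm j i (fun hji => hi ((hmem j i).mpr hji))]
          simp only [mul_pow, Finset.prod_mul_distrib, div_eq_mul_inv]
          ring
        · rw [if_neg hm]
          symm
          push_neg at hm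
          obtain ⟨j, i, hij, hmji⟩ := hm
          refine Finset.prod_eq_zero (Finset.mem_univ j) ?_
          simp only [hg]
          rw [if_neg]
          intro hall
          exact hmji (hall i fun hmem' => hij ((hmem j i).mp hmem'))
    _ = ∏ j, ∑' v : I → ℕ, g j v := tsum_pi_prod_aux (Fintype.card J) J _ g rfl
    _ = ∏ j, ∑' mj : ℕ,
          ∏ l ∈ Finset.Icc 1 mj, (∑ i ∈ routesThrough j, (ζ j i : ℝ≥0∞) * ρ i) / φ j l := by
        refine Finset.prod_congr rfl fun j _ => ?_
        have hq := queue_tsum (routesThrough j) (fun i => (ζ j i : ℝ≥0∞) * ρ i)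
          (fun mtot => (∏ l ∈ Finset.Icc 1 mtot, φ j l)⁻¹)
        simp only [hg]
        refine hq.trans ?_
        refine tsum_congr fun mj => ?_
        have hcard : (Finset.Icc 1 mj).card = mj := by
          rw [Nat.card_Icc]
          omega
        have hinv : (∏ l ∈ Finset.Icc 1 mj, φ j l)⁻¹
            = ∏ l ∈ Finset.Icc 1 mj, (φ j l)⁻¹ :=
          ENNReal.prod_inv_distrib fun a ha b hb _ =>
            Or.inl (hφ j a (Finset.mem_Icc.mp (Finset.mem_coe.mp ha)).1).ne'
        simp only [div_eq_mul_inv, Finset.prod_mul_distrib, Finset.prod_const, hcard, hinv]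
end

section
/- With the setup of the normalizing constants $B_n$ for a closed multi-class queueing network, fix $i \in \mathcal{I}$, $n \in \mathbb{Z}_+^I$ with $n_i > 0$, and $j \in i$. Then $\sum_{m \in S(n),\, m_j > 0} \phi_j(m_j)\, \frac{1}{\zeta_{ji}}\, \frac{m_{ji}}{m_j} \prod_{l \in \mathcal{J}} \binom{m_l}{(m_{lr})_{r \ni l}} \frac{\prod_{r : l \in r} \zeta_{lr}^{m_{lr}}}{\prod_{c=1}^{m_l} \phi_l(c)} = B_{n - e_i}$, where $e_i$ is the $i$-th unit vector. -/
open scoped ENNReal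

/-- The throughput identity for closed multi-class queueing networks: for `n` with
`n_i > 0` and `j ∈ i`,
`∑_{m ∈ S(n), m_j > 0} φ_j(m_j) ζ_{ji}⁻¹ (m_{ji}/m_j) ∏_l binom · = B_{n-e_i}`,
which shows the stationary per-document route-`i` throughput is `B_{n-e_i}/(n_i B_n)`. -/
theorem closed_network_throughput {J I : Type*}
    [Fintype J] [Fintype I] [DecidableEq J] [DecidableEq I]
    (route : I → Finset J) (hroute : ∀ i, (route i).Nonempty)
    (ζ : J → I → ℕ) (hζ : ∀ i, ∀ j ∈ route i, 0 < ζ j i)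
    (φ : J → ℕ → ℝ≥0∞) (hφ : ∀ j l, 1 ≤ l → 0 < φ j l) (hφ' : ∀ j l, φ j l ≠ ∞)
    (i₀ : I) (j₀ : J) (hj₀ : j₀ ∈ route i₀)
    (n : I → ℕ) (hn : 0 < n i₀) :
    let routesThrough : J → Finset I := fun j => Finset.univ.filter fun i => j ∈ route i
    let mtot : (J → I → ℕ) → J → ℕ := fun m j => ∑ i ∈ routesThrough j, m j i
    let term : (J → I → ℕ) → ℝ≥0∞ := fun m =>
      ∏ j, (Nat.multinomial (routesThrough j) (m j) : ℝ≥0∞)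
        * (∏ i ∈ routesThrough j, (ζ j i : ℝ≥0∞) ^ m j i)
        / ∏ l ∈ Finset.Icc 1 (mtot m j), φ j l
    let B : (I → ℕ) → ℝ≥0∞ := fun n' =>
      ∑' m : J → I → ℕ,
        if (∀ i, ∑ j ∈ route i, m j i = n' i) ∧ (∀ j i, j ∉ route i → m j i = 0) then
          term m
        else 0
    (∑' m : J → I → ℕ,
        if (∀ i, ∑ j ∈ route i, m j i = n i) ∧ (∀ j i, j ∉ route i → m j i = 0)
            ∧ 0 < mtot m j₀ then
          φ j₀ (mtot m j₀) * ((ζ j₀ i₀ : ℝ≥0∞))⁻¹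
            * ((m j₀ i₀ : ℝ≥0∞) / (mtot m j₀ : ℝ≥0∞)) * term m
        else 0)
      = B (Function.update n i₀ (n i₀ - 1)) := by
  intro routesThrough mtot term B
  classical
  -- the shift map `m ↦ m + e_{j₀ i₀}`
  set F : (J → I → ℕ) → (J → I → ℕ) :=
    fun m j i => m j i + if j = j₀ ∧ i = i₀ then 1 else 0 with hF
  have hFinj : Function.Injective F := by
    intro a b hab
    funext j i
    have h := congrFun (congrFun hab j) i
    simp only [F] at h
    by_cases hc : j = j₀ ∧ i = i₀
    · obtain ⟨rfl, rfl⟩ := hc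
      simp only [and_self, if_true] at h
      omega
    · rw [if_neg hc] at h
      omega
  have hi₀mem : i₀ ∈ routesThrough j₀ := by simp [routesThrough, hj₀]
  have hFj : ∀ (m : J → I → ℕ) (j : J), j ≠ j₀ → F m j = m j := by
    intro m j hj
    funext i
    simp [F, hj]
  have hmtotF : ∀ m : J → I → ℕ, mtot (F m) j₀ = mtot m j₀ + 1 := by
    intro m
    show ∑ i ∈ routesThrough j₀, F m j₀ i = (∑ i ∈ routesThrough j₀, m j₀ i) + 1
    simp only [F]
    rw [Finset.sum_add_distrib]
    congr 1
    simp [hi₀mem]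
  have hmtotF' : ∀ (m : J → I → ℕ) (j : J), j ≠ j₀ → mtot (F m) j = mtot m j := by
    intro m j hj
    show ∑ i ∈ routesThrough j, F m j i = ∑ i ∈ routesThrough j, m j i
    exact Finset.sum_congr rfl fun i _ => by simp [F, hj]
  -- basic nonvanishing facts
  have hζ0 : (ζ j₀ i₀ : ℝ≥0∞) ≠ 0 := by exact_mod_cast (hζ i₀ j₀ hj₀).ne'
  have hζtop : (ζ j₀ i₀ : ℝ≥0∞) ≠ ∞ := ENNReal.natCast_ne_top _
  -- the key per-`j₀` algebraic identity
  have hfac : ∀ m : J → I → ℕ,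
      φ j₀ (mtot (F m) j₀) * ((ζ j₀ i₀ : ℝ≥0∞))⁻¹
          * ((F m j₀ i₀ : ℝ≥0∞) / (mtot (F m) j₀ : ℝ≥0∞))
          * ((Nat.multinomial (routesThrough j₀) (F m j₀) : ℝ≥0∞)
              * (∏ i ∈ routesThrough j₀, (ζ j₀ i : ℝ≥0∞) ^ F m j₀ i)
              / ∏ l ∈ Finset.Icc 1 (mtot (F m) j₀), φ j₀ l)
        = (Nat.multinomial (routesThrough j₀) (m j₀) : ℝ≥0∞)
            * (∏ i ∈ routesThrough j₀, (ζ j₀ i : ℝ≥0∞) ^ m j₀ i)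
            / ∏ l ∈ Finset.Icc 1 (mtot m j₀), φ j₀ l := by
    intro m
    have hF0 : F m j₀ i₀ = m j₀ i₀ + 1 := by simp [F]
    -- nat multinomial identity
    have hprodF : ∏ i ∈ routesThrough j₀, Nat.factorial (F m j₀ i)
        = (m j₀ i₀ + 1) * ∏ i ∈ routesThrough j₀, Nat.factorial (m j₀ i) := by
      rw [← Finset.mul_prod_erase _ (fun i => Nat.factorial (F m j₀ i)) hi₀mem,
          ← Finset.mul_prod_erase _ (fun i => Nat.factorial (m j₀ i)) hi₀mem, hF0, Nat.factorial_succ]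
      have he : ∏ i ∈ (routesThrough j₀).erase i₀, Nat.factorial (F m j₀ i)
          = ∏ i ∈ (routesThrough j₀).erase i₀, Nat.factorial (m j₀ i) :=
        Finset.prod_congr rfl fun i hi => by simp [F, Finset.ne_of_mem_erase hi]
      rw [he]; ring
    have hsumF : ∑ i ∈ routesThrough j₀, F m j₀ i = mtot m j₀ + 1 := hmtotF m
    have h1 := Nat.multinomial_spec (routesThrough j₀) (F m j₀)
    have h2 := Nat.multinomial_spec (routesThrough j₀) (m j₀)
    rw [hsumF] at h1
    rw [show ∑ i ∈ routesThrough j₀, m j₀ i = mtot m j₀ from rfl] at h2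
    have hpos : 0 < ∏ i ∈ routesThrough j₀, Nat.factorial (m j₀ i) :=
      Finset.prod_pos fun i _ => Nat.factorial_pos _
    have hkey : (m j₀ i₀ + 1) * Nat.multinomial (routesThrough j₀) (F m j₀)
        = (mtot m j₀ + 1) * Nat.multinomial (routesThrough j₀) (m j₀) := by
      refine Nat.eq_of_mul_eq_mul_left hpos ?_
      calc (∏ i ∈ routesThrough j₀, Nat.factorial (m j₀ i))
            * ((m j₀ i₀ + 1) * Nat.multinomial (routesThrough j₀) (F m j₀))
          = ((m j₀ i₀ + 1) * ∏ i ∈ routesThrough j₀, Nat.factorial (m j₀ i))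
            * Nat.multinomial (routesThrough j₀) (F m j₀) := by ring
        _ = (∏ i ∈ routesThrough j₀, Nat.factorial (F m j₀ i))
            * Nat.multinomial (routesThrough j₀) (F m j₀) := by rw [hprodF]
        _ = Nat.factorial (mtot m j₀ + 1) := h1
        _ = (mtot m j₀ + 1) * Nat.factorial (mtot m j₀) := Nat.factorial_succ _
        _ = (mtot m j₀ + 1) * ((∏ i ∈ routesThrough j₀, Nat.factorial (m j₀ i))
              * Nat.multinomial (routesThrough j₀) (m j₀)) := by rw [h2]
        _ = _ := by ring
    -- products split
    have hP : ∏ i ∈ routesThrough j₀, (ζ j₀ i : ℝ≥0∞) ^ F m j₀ i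
        = (ζ j₀ i₀ : ℝ≥0∞) * ∏ i ∈ routesThrough j₀, (ζ j₀ i : ℝ≥0∞) ^ m j₀ i := by
      rw [← Finset.mul_prod_erase _ (fun i => (ζ j₀ i : ℝ≥0∞) ^ F m j₀ i) hi₀mem,
          ← Finset.mul_prod_erase _ (fun i => (ζ j₀ i : ℝ≥0∞) ^ m j₀ i) hi₀mem, hF0, pow_succ]
      have he : ∏ i ∈ (routesThrough j₀).erase i₀, (ζ j₀ i : ℝ≥0∞) ^ F m j₀ i
          = ∏ i ∈ (routesThrough j₀).erase i₀, (ζ j₀ i : ℝ≥0∞) ^ m j₀ i :=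
        Finset.prod_congr rfl fun i hi => by simp [F, Finset.ne_of_mem_erase hi]
      rw [he]; ring
    have hQsplit : ∏ l ∈ Finset.Icc 1 (mtot m j₀ + 1), φ j₀ l
        = (∏ l ∈ Finset.Icc 1 (mtot m j₀), φ j₀ l) * φ j₀ (mtot m j₀ + 1) :=
      Finset.prod_Icc_succ_top (Nat.succ_le_succ (Nat.zero_le _)) _
    have hQ0 : (∏ l ∈ Finset.Icc 1 (mtot m j₀), φ j₀ l) ≠ 0 := by
      rw [Finset.prod_ne_zero_iff]
      intro l hl
      exact (hφ j₀ l (Finset.mem_Icc.mp hl).1).ne'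
    have hQt : (∏ l ∈ Finset.Icc 1 (mtot m j₀), φ j₀ l) ≠ ∞ :=
      ENNReal.prod_ne_top fun l _ => hφ' j₀ l
    have ha0 : φ j₀ (mtot m j₀ + 1) ≠ 0 := (hφ j₀ _ (Nat.succ_le_succ (Nat.zero_le _))).ne'
    have hat : φ j₀ (mtot m j₀ + 1) ≠ ∞ := hφ' j₀ _
    have hs0 : ((mtot m j₀ + 1 : ℕ) : ℝ≥0∞) ≠ 0 := Nat.cast_ne_zero.mpr (Nat.succ_ne_zero _)
    have hst : ((mtot m j₀ + 1 : ℕ) : ℝ≥0∞) ≠ ∞ := ENNReal.natCast_ne_top _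
    rw [hmtotF m, hF0, hP, hQsplit]
    -- now pure algebra in ℝ≥0∞
    set a := φ j₀ (mtot m j₀ + 1)
    set z := (ζ j₀ i₀ : ℝ≥0∞)
    set r := ((m j₀ i₀ + 1 : ℕ) : ℝ≥0∞) with hr
    set s := ((mtot m j₀ + 1 : ℕ) : ℝ≥0∞) with hs
    set A := (Nat.multinomial (routesThrough j₀) (F m j₀) : ℝ≥0∞) with hA
    set A₀ := (Nat.multinomial (routesThrough j₀) (m j₀) : ℝ≥0∞) with hA₀
    set P := ∏ i ∈ routesThrough j₀, (ζ j₀ i : ℝ≥0∞) ^ m j₀ i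
    set Q := ∏ l ∈ Finset.Icc 1 (mtot m j₀), φ j₀ l
    have hcast : r * A = s * A₀ := by
      rw [hr, hs, hA, hA₀]
      exact_mod_cast congrArg (Nat.cast : ℕ → ℝ≥0∞) hkey
    have hratio : r * s⁻¹ * A = A₀ := by
      calc r * s⁻¹ * A = (r * A) * s⁻¹ := by ring
        _ = (s * A₀) * s⁻¹ := by rw [hcast]
        _ = A₀ * (s * s⁻¹) := by ring
        _ = A₀ := by rw [ENNReal.mul_inv_cancel hs0 hst, mul_one]
    rw [div_eq_mul_inv, div_eq_mul_inv, div_eq_mul_inv,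
        ENNReal.mul_inv (Or.inl hQ0) (Or.inl hQt)]
    calc a * z⁻¹ * (r * s⁻¹) * (A * (z * P) * (Q⁻¹ * a⁻¹))
        = ((a * a⁻¹) * (z⁻¹ * z)) * ((r * s⁻¹ * A) * (P * Q⁻¹)) := by ring
      _ = A₀ * P * Q⁻¹ := by
          rw [ENNReal.mul_inv_cancel ha0 hat, ENNReal.inv_mul_cancel hζ0 hζtop, hratio]
          ring
  -- the full per-term identity
  have hterm : ∀ m : J → I → ℕ,
      φ j₀ (mtot (F m) j₀) * ((ζ j₀ i₀ : ℝ≥0∞))⁻¹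
        * ((F m j₀ i₀ : ℝ≥0∞) / (mtot (F m) j₀ : ℝ≥0∞)) * term (F m) = term m := by
    intro m
    show φ j₀ (mtot (F m) j₀) * ((ζ j₀ i₀ : ℝ≥0∞))⁻¹
        * ((F m j₀ i₀ : ℝ≥0∞) / (mtot (F m) j₀ : ℝ≥0∞))
        * ∏ j, (Nat.multinomial (routesThrough j) (F m j) : ℝ≥0∞)
            * (∏ i ∈ routesThrough j, (ζ j i : ℝ≥0∞) ^ F m j i)
            / ∏ l ∈ Finset.Icc 1 (mtot (F m) j), φ j l
      = ∏ j, (Nat.multinomial (routesThrough j) (m j) : ℝ≥0∞)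
            * (∏ i ∈ routesThrough j, (ζ j i : ℝ≥0∞) ^ m j i)
            / ∏ l ∈ Finset.Icc 1 (mtot m j), φ j l
    rw [← Finset.mul_prod_erase Finset.univ _ (Finset.mem_univ j₀),
        ← Finset.mul_prod_erase Finset.univ
          (fun j => (Nat.multinomial (routesThrough j) (m j) : ℝ≥0∞)
            * (∏ i ∈ routesThrough j, (ζ j i : ℝ≥0∞) ^ m j i)
            / ∏ l ∈ Finset.Icc 1 (mtot m j), φ j l) (Finset.mem_univ j₀)]
    have hrest : ∏ j ∈ Finset.univ.erase j₀,
        ((Nat.multinomial (routesThrough j) (F m j) : ℝ≥0∞)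
          * (∏ i ∈ routesThrough j, (ζ j i : ℝ≥0∞) ^ F m j i)
          / ∏ l ∈ Finset.Icc 1 (mtot (F m) j), φ j l)
        = ∏ j ∈ Finset.univ.erase j₀,
        ((Nat.multinomial (routesThrough j) (m j) : ℝ≥0∞)
          * (∏ i ∈ routesThrough j, (ζ j i : ℝ≥0∞) ^ m j i)
          / ∏ l ∈ Finset.Icc 1 (mtot m j), φ j l) := by
      refine Finset.prod_congr rfl fun j hj => ?_
      have hjne : j ≠ j₀ := Finset.ne_of_mem_erase hj
      rw [hFj m j hjne, hmtotF' m j hjne]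
    rw [hrest, ← mul_assoc, hfac m]
  -- reindex the sum
  have hsupp : Function.support (fun m : J → I → ℕ =>
      if (∀ i, ∑ j ∈ route i, m j i = n i) ∧ (∀ j i, j ∉ route i → m j i = 0)
          ∧ 0 < mtot m j₀ then
        φ j₀ (mtot m j₀) * ((ζ j₀ i₀ : ℝ≥0∞))⁻¹
          * ((m j₀ i₀ : ℝ≥0∞) / (mtot m j₀ : ℝ≥0∞)) * term m
      else 0) ⊆ Set.range F := by
    intro m hm
    simp only [Function.mem_support, ne_eq] at hm
    have hpos : 0 < m j₀ i₀ := by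
      by_contra h
      push_neg at h
      have hm0 : m j₀ i₀ = 0 := Nat.le_zero.mp h
      apply hm
      by_cases hc : (∀ i, ∑ j ∈ route i, m j i = n i) ∧ (∀ j i, j ∉ route i → m j i = 0)
          ∧ 0 < mtot m j₀
      · rw [if_pos hc, hm0]
        simp
      · rw [if_neg hc]
    refine ⟨fun j i => m j i - if j = j₀ ∧ i = i₀ then 1 else 0, ?_⟩
    funext j i
    simp only [F]
    by_cases hc : j = j₀ ∧ i = i₀
    · obtain ⟨rfl, rfl⟩ := hc
      simp only [and_self, if_pos trivial, if_true]
      omega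
    · simp [hc]
  rw [← hFinj.tsum_eq hsupp]
  show _ = ∑' m : J → I → ℕ,
      if (∀ i, ∑ j ∈ route i, m j i = Function.update n i₀ (n i₀ - 1) i)
          ∧ (∀ j i, j ∉ route i → m j i = 0) then term m else 0
  refine tsum_congr fun m => ?_
  -- the two conditions are equivalent
  have hsum_i : ∀ i, i ≠ i₀ → ∑ j ∈ route i, F m j i = ∑ j ∈ route i, m j i := fun i hi =>
    Finset.sum_congr rfl fun j _ => by simp [F, hi]
  have hsum_i₀ : ∑ j ∈ route i₀, F m j i₀ = (∑ j ∈ route i₀, m j i₀) + 1 := by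
    simp only [F]
    rw [Finset.sum_add_distrib]
    congr 1
    simp [hj₀]
  have hcond :
      ((∀ i, ∑ j ∈ route i, F m j i = n i) ∧ (∀ j i, j ∉ route i → F m j i = 0)
          ∧ 0 < mtot (F m) j₀)
        ↔ ((∀ i, ∑ j ∈ route i, m j i = Function.update n i₀ (n i₀ - 1) i)
          ∧ (∀ j i, j ∉ route i → m j i = 0)) := by
    constructor
    · rintro ⟨h1, h2, -⟩
      refine ⟨fun i => ?_, fun j i hji => ?_⟩
      · rcases eq_or_ne i i₀ with h' | hi
        · have h := h1 i₀
          rw [hsum_i₀] at h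
          rw [h', Function.update_self]
          omega
        · rw [Function.update_of_ne hi, ← hsum_i i hi]
          exact h1 i
      · have h := h2 j i hji
        have hne : ¬(j = j₀ ∧ i = i₀) := by
          rintro ⟨rfl, rfl⟩; exact hji hj₀
        simpa [F, hne] using h
    · rintro ⟨h1, h2⟩
      refine ⟨fun i => ?_, fun j i hji => ?_, ?_⟩
      · rcases eq_or_ne i i₀ with h' | hi
        · have h := h1 i₀
          rw [Function.update_self] at h
          rw [h', hsum_i₀]
          omega
        · rw [hsum_i i hi]
          have h := h1 i
          rwa [Function.update_of_ne hi] at h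
      · have hne : ¬(j = j₀ ∧ i = i₀) := by
          rintro ⟨rfl, rfl⟩; exact hji hj₀
        simp [F, hne, h2 j i hji]
      · rw [hmtotF]
        omega
    -- conclude
  by_cases hc : (∀ i, ∑ j ∈ route i, m j i = Function.update n i₀ (n i₀ - 1) i)
      ∧ (∀ j i, j ∉ route i → m j i = 0)
  · rw [if_pos (hcond.mpr hc), if_pos hc]
    exact hterm m
  · rw [if_neg (fun h => hc (hcond.mp h)), if_neg hc]
end
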